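/- For the 9×9 braid matrix R̂(θ) of the N = 3 case, the constant matrix H := (d/dθ)R̂(θ)|_{θ=0} (equivalently H = Σ_{α≠(22)} m_α P_α in the projector basis) satisfies the double-commutator equation [[H₁₂, H₂₃], H₁₂] = [[H₂₃, H₁₂], H₂₃], where H₁₂ = H⊗I₃ and H₂₃ = I₃⊗H. -/

import Mathlib

open Matrix Kronecker

/-- The 9×9 braid matrix `R̂(θ)` of the `N = 3` case, written on the index set
`Fin 3 × Fin 3` (0-based pairs, ordered lexicographically as the rows/columns of
the 9×9 matrix).  Its nonzero entries sit on the diagonal and the antidiagonal: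
`a₊,b₊,a₊,c₊,1,c₊,a₊,b₊,a₊` on the diagonal and `a₋,b₋,a₋,c₋,·,c₋,a₋,b₋,a₋` on
the antidiagonal, where
`a_±(θ) = (e^{m₁₁⁺θ} ± e^{m₁₁⁻θ})/2`, `b_±(θ) = (e^{m₁₂⁺θ} ± e^{m₁₂⁻θ})/2`,
`c_±(θ) = (e^{m₂₁⁺θ} ± e^{m₂₁⁻θ})/2`. -/
noncomputable def Rhat (m11p m11m m12p m12m m21p m21m : ℝ) (θ : ℝ) :
    Matrix (Fin 3 × Fin 3) (Fin 3 × Fin 3) ℝ :=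
  let aP : ℝ := (Real.exp (m11p*θ) + Real.exp (m11m*θ))/2
  let aM : ℝ := (Real.exp (m11p*θ) - Real.exp (m11m*θ))/2
  let bP : ℝ := (Real.exp (m12p*θ) + Real.exp (m12m*θ))/2
  let bM : ℝ := (Real.exp (m12p*θ) - Real.exp (m12m*θ))/2
  let cP : ℝ := (Real.exp (m21p*θ) + Real.exp (m21m*θ))/2
  let cM : ℝ := (Real.exp (m21p*θ) - Real.exp (m21m*θ))/2
  fun x y =>
    if y = x then
      (if x = ((1, 1) : Fin 3 × Fin 3) then 1
       else if x.1 = 1 then cP else if x.2 = 1 then bP else aP)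
    else if y = (2 - x.1, 2 - x.2) then
      (if x.1 = 1 then cM else if x.2 = 1 then bM else aM)
    else 0

/-- `H := (d/dθ) R̂(θ) |_{θ=0}` (entrywise derivative at 0). -/
noncomputable def Hmat (m11p m11m m12p m12m m21p m21m : ℝ) :
    Matrix (Fin 3 × Fin 3) (Fin 3 × Fin 3) ℝ :=
  fun x y => deriv (fun θ => Rhat m11p m11m m12p m12m m21p m21m θ x y) 0

/-- `H₁₂ = H ⊗ I₃` as a 27×27 matrix. -/
noncomputable def Hmat12 (m11p m11m m12p m12m m21p m21m : ℝ) :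
    Matrix (Fin 3 × Fin 3 × Fin 3) (Fin 3 × Fin 3 × Fin 3) ℝ :=
  Matrix.reindex (Equiv.prodAssoc _ _ _) (Equiv.prodAssoc _ _ _)
    (Hmat m11p m11m m12p m12m m21p m21m ⊗ₖ (1 : Matrix (Fin 3) (Fin 3) ℝ))

/-- `H₂₃ = I₃ ⊗ H` as a 27×27 matrix. -/
noncomputable def Hmat23 (m11p m11m m12p m12m m21p m21m : ℝ) :
    Matrix (Fin 3 × Fin 3 × Fin 3) (Fin 3 × Fin 3 × Fin 3) ℝ :=
  (1 : Matrix (Fin 3) (Fin 3) ℝ) ⊗ₖ Hmat m11p m11m m12p m12m m21p m21m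
/-!
Write `H = D + E (K ⊗ K)` with `D`, `E` diagonal and `K` the reversal `i ↦ 2 - i` of `Fin 3`.
The coefficients of `D` and `E` only depend on which tensor factors carry the middle index `1`,
and reversing a single factor does not change that. Hence `H₁₂ = D₁₂ + E₁₂ K₁K₂` and
`H₂₃ = D₂₃ + E₂₃ K₂K₃` are built from diagonal and permutation matrices that commute pairwise,
so `H₁₂` and `H₂₃` commute and both double commutators vanish.
-/

namespace Matrix

open Equiv

variable {n α β γ R : Type*} [Fintype n] [DecidableEq n]

theorem commute_permMatrix_diagonal [NonAssocSemiring R] {σ : Perm n} {f : n → R}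
    (hf : ∀ x, f (σ x) = f x) : Commute (σ.permMatrix R) (diagonal f) := by
  ext x y
  simp only [PEquiv.toMatrix_toPEquiv_mul, PEquiv.mul_toMatrix_toPEquiv,
    submatrix_apply, diagonal_apply, id, hf, ← σ.eq_symm_apply]

theorem commute_permMatrix [NonAssocSemiring R] {σ τ : Perm n} (h : Commute σ τ) :
    Commute (σ.permMatrix R) (τ.permMatrix R) := by
  simp only [Commute, SemiconjBy, ← permMatrix_mul, h.eq]

theorem commute_diagonal_add_diagonal_mul_permMatrix [CommSemiring R] {σ τ : Perm n}
    {d e d' e' : n → R} (hστ : Commute σ τ) (hd : ∀ x, d (τ x) = d x) (he : ∀ x, e (τ x) = e x)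
    (hd' : ∀ x, d' (σ x) = d' x) (he' : ∀ x, e' (σ x) = e' x) :
    Commute (diagonal d + diagonal e * σ.permMatrix R)
      (diagonal d' + diagonal e' * τ.permMatrix R) := by
  have hdiag {f : n → R} (hf : ∀ x, f (τ x) = f x) :
      Commute (diagonal f) (diagonal d' + diagonal e' * τ.permMatrix R) :=
    .add_right (commute_diagonal _ _) <|
      .mul_right (commute_diagonal _ _) (commute_permMatrix_diagonal hf).symm
  exact .add_left (hdiag hd) <| .mul_left (hdiag he) <|
    .add_right (commute_permMatrix_diagonal hd') <|
      .mul_right (commute_permMatrix_diagonal he') (commute_permMatrix hστ)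

variable [Fintype α] [Fintype β] [Fintype γ] [DecidableEq α] [DecidableEq β] [DecidableEq γ]

theorem one_kronecker_diagonal_add_diagonal_mul_permMatrix [Semiring R] (d e : β → R)
    (σ : Perm β) :
    (1 : Matrix α α R) ⊗ₖ (diagonal d + diagonal e * σ.permMatrix R) =
      diagonal (fun x : α × β => d x.2) +
        diagonal (fun x : α × β => e x.2) * Perm.permMatrix R ((Equiv.refl α).prodCongr σ) := by
  ext ⟨a, b⟩ ⟨a', b'⟩
  by_cases ha : a = a' <;> simp [diagonal_apply, ha]

theorem reindex_kronecker_one_diagonal_add_diagonal_mul_permMatrix [Semiring R]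
    (d e : α × β → R) (σ : Perm (α × β)) :
    reindex (prodAssoc α β γ) (prodAssoc α β γ)
        ((diagonal d + diagonal e * σ.permMatrix R) ⊗ₖ (1 : Matrix γ γ R)) =
      diagonal (fun x => d (x.1, x.2.1)) + diagonal (fun x => e (x.1, x.2.1)) *
        ((prodAssoc α β γ).permCongr (σ.prodCongr (Equiv.refl γ))).permMatrix R := by
  ext ⟨a, b, c⟩ ⟨a', b', c'⟩
  by_cases hc : c = c' <;> simp [diagonal_apply, Prod.ext_iff, hc]

end Matrix

theorem hasDerivAt_exp_mul_zero (p : ℝ) : HasDerivAt (fun θ => Real.exp (p * θ)) p 0 := by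
  simpa using ((hasDerivAt_id (0 : ℝ)).const_mul p).exp

theorem deriv_exp_add_exp_div_two (p q : ℝ) :
    deriv (fun θ => (Real.exp (p * θ) + Real.exp (q * θ)) / 2) 0 = (p + q) / 2 :=
  (((hasDerivAt_exp_mul_zero p).add (hasDerivAt_exp_mul_zero q)).div_const 2).deriv

theorem deriv_exp_sub_exp_div_two (p q : ℝ) :
    deriv (fun θ => (Real.exp (p * θ) - Real.exp (q * θ)) / 2) 0 = (p - q) / 2 :=
  (((hasDerivAt_exp_mul_zero p).sub (hasDerivAt_exp_mul_zero q)).div_const 2).deriv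

theorem fin_three_sub_eq_rev : ∀ i : Fin 3, 2 - i = i.rev := by decide

theorem fin_three_rev_eq_self_iff : ∀ i : Fin 3, i.rev = i ↔ i = 1 := by decide

theorem fin_three_rev_eq_one_iff : ∀ i : Fin 3, i.rev = 1 ↔ i = 1 := by decide

/-- `a`, `b`, `c` are the coefficients of the sectors of `m₁₁`, `m₁₂`, `m₂₁` (in 0-based indices:
no index, only the second, only the first index equal to `1`); the sector `(1, 1)` gets `0`. -/
def sectorCoeff (a b c : ℝ) (x : Fin 3 × Fin 3) : ℝ :=
  if x.1 = 1 then (if x.2 = 1 then 0 else c) else if x.2 = 1 then b else a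

theorem sectorCoeff_rev_fst (a b c : ℝ) (i j : Fin 3) :
    sectorCoeff a b c (i.rev, j) = sectorCoeff a b c (i, j) := by
  simp only [sectorCoeff, fin_three_rev_eq_one_iff]

theorem sectorCoeff_rev_snd (a b c : ℝ) (i j : Fin 3) :
    sectorCoeff a b c (i, j.rev) = sectorCoeff a b c (i, j) := by
  simp only [sectorCoeff, fin_three_rev_eq_one_iff]

theorem Hmat_apply (m11p m11m m12p m12m m21p m21m : ℝ) (x y : Fin 3 × Fin 3) :
    Hmat m11p m11m m12p m12m m21p m21m x y =
      if y = x then sectorCoeff ((m11p + m11m) / 2) ((m12p + m12m) / 2) ((m21p + m21m) / 2) x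
      else if y = (2 - x.1, 2 - x.2) then
        sectorCoeff ((m11p - m11m) / 2) ((m12p - m12m) / 2) ((m21p - m21m) / 2) x
      else 0 := by
  simp only [Hmat, Rhat]
  split_ifs <;> simp only [deriv_exp_add_exp_div_two, deriv_exp_sub_exp_div_two, deriv_const] <;>
    simp_all [sectorCoeff, Prod.ext_iff, fin_three_sub_eq_rev, fin_three_rev_eq_self_iff]

theorem Hmat_eq_diagonal_add_diagonal_mul_permMatrix (m11p m11m m12p m12m m21p m21m : ℝ) :
    Hmat m11p m11m m12p m12m m21p m21m =
      diagonal (sectorCoeff ((m11p + m11m) / 2) ((m12p + m12m) / 2) ((m21p + m21m) / 2)) +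
        diagonal (sectorCoeff ((m11p - m11m) / 2) ((m12p - m12m) / 2) ((m21p - m21m) / 2)) *
          Equiv.Perm.permMatrix ℝ (Fin.revPerm.prodCongr Fin.revPerm) := by
  ext x y
  simp only [Hmat_apply, Matrix.add_apply, diagonal_apply, diagonal_mul, Equiv.Perm.permMatrix,
    PEquiv.toMatrix_toPEquiv_apply, Equiv.prodCongr_apply, Prod.map, Fin.revPerm_apply,
    fin_three_sub_eq_rev]
  by_cases hyx : y = x
  · subst hyx
    by_cases hy : y = (1, 1)
    · simp [hy, sectorCoeff]
    · have hrev : (y.1.rev, y.2.rev) ≠ y := by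
        simpa [Prod.ext_iff, fin_three_rev_eq_self_iff] using hy
      simp [hrev]
  · simp [Ne.symm hyx, hyx, Pi.single_apply]

/-- The matrix `H = (d/dθ)R̂(θ)|₀` of the `N = 3` braid matrix satisfies the
double-commutator equation `[[H₁₂,H₂₃],H₁₂] = [[H₂₃,H₁₂],H₂₃]`. -/
theorem Hmat_double_commutator (m11p m11m m12p m12m m21p m21m : ℝ) :
    let A := Hmat12 m11p m11m m12p m12m m21p m21m
    let B := Hmat23 m11p m11m m12p m12m m21p m21m
    (A * B - B * A) * A - A * (A * B - B * A) =
    (B * A - A * B) * B - B * (B * A - A * B) := by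
  intro A B
  have hcomm : Commute A B := by
    simp only [A, B, Hmat12, Hmat23, Hmat_eq_diagonal_add_diagonal_mul_permMatrix,
      reindex_kronecker_one_diagonal_add_diagonal_mul_permMatrix,
      one_kronecker_diagonal_add_diagonal_mul_permMatrix]
    refine commute_diagonal_add_diagonal_mul_permMatrix ?_ ?_ ?_ ?_ ?_
    · ext ⟨a, b, c⟩ <;> rfl
    all_goals intro x; simp [sectorCoeff_rev_fst, sectorCoeff_rev_snd]
  simp only [hcomm.eq, sub_self, zero_mul, mul_zero]
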